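/- Let C be a monotone, zero-based, hierarchically consistent cost family on d dimensions, let Δ be a last-level gap bound for the family, let q ≥ 1 and P ≥ 1 be natural numbers with P·q < C_0(N 0). For 0 ≤ p ≤ P let x̄_p = FindPartition(p·q), and for 0 ≤ p < P let cost_p denote the integer C(x̄_{p+1}) − C(x̄_p). Then for all p, p' < P, |cost_p − cost_{p'}| < 2Δ; that is, partitions constructed from equally spaced query values incur a maximum load imbalance of less than 2Δ. -/
import Mathlib


noncomputable section

open scoped Classical
open Finset

namespace Nacho

/-- A prefix `p` is valid up to length `m` if its entries below `m` are within the extents. -/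
def ValidPrefix {d : ℕ} (N : Fin d → ℕ) (m : ℕ) (p : Fin d → ℕ) : Prop :=
  ∀ k : Fin d, (k : ℕ) < m → p k < N k

/-- A family of cost functions only depends on the prefix below its level. -/
def PrefixDep {d : ℕ} (C : Fin d → (Fin d → ℕ) → ℕ → ℕ) : Prop :=
  ∀ (m : Fin d) (p p' : Fin d → ℕ) (x : ℕ),
    (∀ k : Fin d, (k : ℕ) < (m : ℕ) → p k = p' k) → C m p x = C m p' x

/-- Monotone cost family. -/
def IsMonotoneFam {d : ℕ} (N : Fin d → ℕ) (C : Fin d → (Fin d → ℕ) → ℕ → ℕ) : Prop :=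
  ∀ (m : Fin d) (p : Fin d → ℕ), ValidPrefix N (m : ℕ) p →
    ∀ x : ℕ, x < N m → C m p x ≤ C m p (x + 1)

/-- Zero-based cost family. -/
def IsZeroBased {d : ℕ} (N : Fin d → ℕ) (C : Fin d → (Fin d → ℕ) → ℕ → ℕ) : Prop :=
  ∀ (m : Fin d) (p : Fin d → ℕ), ValidPrefix N (m : ℕ) p → C m p 0 = 0

/-- Hierarchically consistent cost family. -/
def IsHierConsistent {d : ℕ} (N : Fin d → ℕ) (C : Fin d → (Fin d → ℕ) → ℕ → ℕ) : Prop :=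
  ∀ (m : Fin d) (h : (m : ℕ) + 1 < d) (p : Fin d → ℕ), ValidPrefix N (m : ℕ) p →
    ∀ x : ℕ, x < N m →
      C m p (x + 1)
        = C m p x + C ⟨(m : ℕ) + 1, h⟩ (Function.update p m x) (N ⟨(m : ℕ) + 1, h⟩)

/-- One step of the hierarchical search: at level `m`, pick the greatest in-range coordinate
whose cost does not exceed the residual, record it, and subtract its cost. -/
def partStep {d : ℕ} (N : Fin d → ℕ) (C : Fin d → (Fin d → ℕ) → ℕ → ℕ) (m : ℕ)
    (st : (Fin d → ℕ) × ℕ) : (Fin d → ℕ) × ℕ :=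
  if h : m < d then
    let x := Nat.findGreatest (fun y => C ⟨m, h⟩ st.1 y ≤ st.2) (N ⟨m, h⟩ - 1)
    (Function.update st.1 ⟨m, h⟩ x, st.2 - C ⟨m, h⟩ st.1 x)
  else st

/-- Partially-built coordinate and residual after the first `m` levels of `FindPartition`. -/
def partState {d : ℕ} (N : Fin d → ℕ) (C : Fin d → (Fin d → ℕ) → ℕ → ℕ) (Q : ℕ) :
    ℕ → (Fin d → ℕ) × ℕ
  | 0 => (fun _ => 0, Q)
  | m + 1 => partStep N C m (partState N C Q m)

/-- `FindPartition` of the hierarchical search partitioning algorithm. -/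
def findPartition {d : ℕ} (N : Fin d → ℕ) (C : Fin d → (Fin d → ℕ) → ℕ → ℕ) (Q : ℕ) :
    Fin d → ℕ :=
  (partState N C Q d).1

/-- Residual cost `R_m` of `FindPartition`. -/
def residual {d : ℕ} (N : Fin d → ℕ) (C : Fin d → (Fin d → ℕ) → ℕ → ℕ) (Q : ℕ) (m : ℕ) : ℕ :=
  (partState N C Q m).2

/-- Total cost of a coordinate tuple. -/
def totalCost {d : ℕ} (C : Fin d → (Fin d → ℕ) → ℕ → ℕ) (y : Fin d → ℕ) : ℕ :=
  ∑ m : Fin d, C m y (y m)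

/-- Strict lexicographic order on coordinate tuples. -/
def LexLt {d : ℕ} (x y : Fin d → ℕ) : Prop :=
  ∃ m : Fin d, (∀ k : Fin d, (k : ℕ) < (m : ℕ) → x k = y k) ∧ x m < y m

/-- Reflexive lexicographic order on coordinate tuples. -/
def LexLe {d : ℕ} (x y : Fin d → ℕ) : Prop :=
  LexLt x y ∨ x = y

/-- `Δ` bounds the cost gap between adjacent coordinates at the last level. -/
def LastLevelGapBound {d : ℕ} (N : Fin d → ℕ) (C : Fin d → (Fin d → ℕ) → ℕ → ℕ) (Δ : ℕ) :
    Prop :=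
  ∀ (hd : 0 < d) (p : Fin d → ℕ), ValidPrefix N (d - 1) p →
    ∀ x : ℕ, x < N ⟨d - 1, Nat.sub_lt hd Nat.one_pos⟩ →
      C ⟨d - 1, Nat.sub_lt hd Nat.one_pos⟩ p (x + 1)
        - C ⟨d - 1, Nat.sub_lt hd Nat.one_pos⟩ p x ≤ Δ

/-- The count cost family of a finite set of nonzero coordinates. -/
def countCost {d : ℕ} (N : Fin d → ℕ) (S : Finset ((m : Fin d) → Fin (N m))) :
    Fin d → (Fin d → ℕ) → ℕ → ℕ :=
  fun m p x =>
    (S.filter fun c =>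
      (∀ k : Fin d, (k : ℕ) < (m : ℕ) → (c k : ℕ) = p k) ∧ (c m : ℕ) < x).card

/-- The summed count family of finitely many finite sets of nonzero coordinates. -/
def summedCost {d : ℕ} (N : Fin d → ℕ) {t : ℕ}
    (S : Fin t → Finset ((m : Fin d) → Fin (N m))) :
    Fin d → (Fin d → ℕ) → ℕ → ℕ :=
  fun m p x => ∑ i, countCost N (S i) m p x

section Helpers

variable {d : ℕ} {N : Fin d → ℕ} {C : Fin d → (Fin d → ℕ) → ℕ → ℕ}

/-- The coordinate selected at level `m`. -/
def xsel (N : Fin d → ℕ) (C : Fin d → (Fin d → ℕ) → ℕ → ℕ) (Q m : ℕ) (h : m < d) : ℕ :=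
  Nat.findGreatest (fun y => C ⟨m, h⟩ (partState N C Q m).1 y ≤ (partState N C Q m).2)
    (N ⟨m, h⟩ - 1)

lemma step_fst {Q m : ℕ} (h : m < d) :
    (partState N C Q (m + 1)).1
      = Function.update (partState N C Q m).1 ⟨m, h⟩ (xsel N C Q m h) := by
  show (partStep N C m (partState N C Q m)).1 = _
  rw [partStep, dif_pos h]
  rfl

lemma step_snd {Q m : ℕ} (h : m < d) :
    (partState N C Q (m + 1)).2
      = (partState N C Q m).2 - C ⟨m, h⟩ (partState N C Q m).1 (xsel N C Q m h) := by
  show (partStep N C m (partState N C Q m)).2 = _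
  rw [partStep, dif_pos h]
  rfl

lemma step_id {Q m : ℕ} (h : ¬ m < d) :
    partState N C Q (m + 1) = partState N C Q m := by
  show partStep N C m (partState N C Q m) = _
  rw [partStep, dif_neg h]

lemma xsel_le {Q m : ℕ} (h : m < d) : xsel N C Q m h ≤ N ⟨m, h⟩ - 1 :=
  Nat.findGreatest_le _

lemma xsel_lt (hN : ∀ m, 1 ≤ N m) {Q m : ℕ} (h : m < d) : xsel N C Q m h < N ⟨m, h⟩ := by
  have := xsel_le (N := N) (C := C) (Q := Q) h
  have := hN ⟨m, h⟩
  omega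

lemma valid_state (hN : ∀ m, 1 ≤ N m) (Q m : ℕ) :
    ValidPrefix N m (partState N C Q m).1 := by
  induction m with
  | zero => intro k hk; exact absurd hk (Nat.not_lt_zero _)
  | succ m ih =>
    intro k hk
    by_cases h : m < d
    · rw [step_fst h]
      rcases eq_or_ne k ⟨m, h⟩ with rfl | hne
      · rw [Function.update_self]; exact xsel_lt hN h
      · rw [Function.update_of_ne hne]
        apply ih k
        have : (k : ℕ) ≠ m := fun hkm => hne (Fin.ext hkm)
        omega
    · rw [step_id h]
      exact ih k (lt_of_lt_of_le k.isLt (by omega))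

lemma agree {Q : ℕ} (m j : ℕ) (hmj : m ≤ j) (k : Fin d) (hk : (k : ℕ) < m) :
    (partState N C Q j).1 k = (partState N C Q m).1 k := by
  induction j with
  | zero => obtain rfl : m = 0 := Nat.le_zero.mp hmj; rfl
  | succ j ih =>
    rcases Nat.eq_or_lt_of_le hmj with rfl | hlt
    · rfl
    · have hmj' : m ≤ j := Nat.lt_succ_iff.mp hlt
      rw [← ih hmj']
      by_cases h : j < d
      · rw [step_fst h, Function.update_of_ne]
        intro he
        have : (k : ℕ) = j := by rw [he]
        omega
      · rw [step_id h]

lemma xsel_spec (hN : ∀ m, 1 ≤ N m) (hZero : IsZeroBased N C) {Q m : ℕ} (h : m < d) :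
    C ⟨m, h⟩ (partState N C Q m).1 (xsel N C Q m h) ≤ (partState N C Q m).2 := by
  have h0 : C ⟨m, h⟩ (partState N C Q m).1 0 ≤ (partState N C Q m).2 := by
    rw [hZero ⟨m, h⟩ _ (valid_state hN Q m)]
    exact Nat.zero_le _
  exact Nat.findGreatest_spec
    (P := fun y => C ⟨m, h⟩ (partState N C Q m).1 y ≤ (partState N C Q m).2)
    (Nat.zero_le _) h0

/-- The residual is strictly below the cost of the next coordinate. -/
lemma resid_lt_next (hN : ∀ m, 1 ≤ N m) {Q m : ℕ} (h : m < d)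
    (hinv : (partState N C Q m).2 < C ⟨m, h⟩ (partState N C Q m).1 (N ⟨m, h⟩)) :
    (partState N C Q m).2 < C ⟨m, h⟩ (partState N C Q m).1 (xsel N C Q m h + 1) := by
  by_cases hcase : xsel N C Q m h + 1 ≤ N ⟨m, h⟩ - 1
  · have hng := Nat.findGreatest_is_greatest (P := fun y =>
      C ⟨m, h⟩ (partState N C Q m).1 y ≤ (partState N C Q m).2)
      (Nat.lt_succ_self _) hcase
    exact Nat.lt_of_not_le hng
  · have h1 := xsel_le (N := N) (C := C) (Q := Q) h
    have h2 := hN ⟨m, h⟩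
    have : xsel N C Q m h + 1 = N ⟨m, h⟩ := by omega
    rw [this]; exact hinv

lemma invariant (hd : 0 < d) (hN : ∀ m, 1 ≤ N m) (hZero : IsZeroBased N C)
    (hHC : IsHierConsistent N C) {Q : ℕ}
    (hQ : Q < C ⟨0, hd⟩ (fun _ => 0) (N ⟨0, hd⟩)) :
    ∀ m (h : m < d), (partState N C Q m).2 < C ⟨m, h⟩ (partState N C Q m).1 (N ⟨m, h⟩) := by
  intro m
  induction m with
  | zero => intro h; exact hQ
  | succ m ih =>
    intro h1
    have hm : m < d := Nat.lt_of_succ_lt h1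
    have hCX := xsel_spec (Q := Q) hN hZero hm
    have hR1 := resid_lt_next (Q := Q) hN hm (ih hm)
    have hHCapp := hHC ⟨m, hm⟩ h1 (partState N C Q m).1 (valid_state hN Q m)
      (xsel N C Q m hm) (xsel_lt hN hm)
    rw [step_snd hm, step_fst hm]
    simp only [Fin.val_mk] at hHCapp
    rw [hHCapp] at hR1
    omega

lemma residual_lt (hd : 0 < d) (hN : ∀ m, 1 ≤ N m) (hZero : IsZeroBased N C)
    (hHC : IsHierConsistent N C) {Δ : ℕ} (hΔ : LastLevelGapBound N C Δ) {Q : ℕ}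
    (hQ : Q < C ⟨0, hd⟩ (fun _ => 0) (N ⟨0, hd⟩)) :
    residual N C Q d < Δ := by
  have hm : d - 1 < d := Nat.sub_lt hd Nat.one_pos
  have hdd : d - 1 + 1 = d := Nat.succ_pred_eq_of_pos hd
  have hCX := xsel_spec (Q := Q) hN hZero hm
  have hR1 := resid_lt_next (Q := Q) hN hm (invariant hd hN hZero hHC hQ (d - 1) hm)
  have hgap : C ⟨d - 1, hm⟩ (partState N C Q (d - 1)).1 (xsel N C Q (d - 1) hm + 1)
      - C ⟨d - 1, hm⟩ (partState N C Q (d - 1)).1 (xsel N C Q (d - 1) hm) ≤ Δ :=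
    hΔ hd (partState N C Q (d - 1)).1 (valid_state hN Q (d - 1))
      (xsel N C Q (d - 1) hm) (xsel_lt hN hm)
  have hst : partState N C Q d = partState N C Q (d - 1 + 1) := by rw [hdd]
  have : residual N C Q d = (partState N C Q (d - 1)).2
      - C ⟨d - 1, hm⟩ (partState N C Q (d - 1)).1 (xsel N C Q (d - 1) hm) := by
    rw [residual, hst, step_snd hm]
  omega

lemma key_sum (hN : ∀ m, 1 ≤ N m) (hZero : IsZeroBased N C) (Q : ℕ) :
    ∀ m, m ≤ d →
    Q = (∑ k ∈ Finset.range m,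
          if h : k < d then C ⟨k, h⟩ (partState N C Q k).1 (xsel N C Q k h) else 0)
        + (partState N C Q m).2 := by
  intro m
  induction m with
  | zero => intro _; simp [partState]
  | succ m ih =>
    intro hm1
    have hm : m < d := hm1
    have hCX := xsel_spec (Q := Q) hN hZero hm
    rw [Finset.sum_range_succ, dif_pos hm, step_snd hm]
    have := ih (Nat.le_of_lt hm)
    omega

lemma total_eq (hN : ∀ m, 1 ≤ N m) (hPD : PrefixDep C) (hZero : IsZeroBased N C) (Q : ℕ) :
    Q = totalCost C (findPartition N C Q) + residual N C Q d := by
  have h := key_sum hN hZero Q d le_rfl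
  have hsum : (∑ k ∈ Finset.range d,
        if h : k < d then C ⟨k, h⟩ (partState N C Q k).1 (xsel N C Q k h) else 0)
      = totalCost C (findPartition N C Q) := by
    rw [totalCost, ← Fin.sum_univ_eq_sum_range
      (fun k => if h : k < d then C ⟨k, h⟩ (partState N C Q k).1 (xsel N C Q k h) else 0) d]
    apply Finset.sum_congr rfl
    intro i _
    have hi : (i : ℕ) < d := i.isLt
    rw [dif_pos hi]
    have heta : (⟨(i : ℕ), hi⟩ : Fin d) = i := Fin.eta i hi
    have hfpi : findPartition N C Q i = xsel N C Q (i : ℕ) hi := by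
      rw [findPartition, agree ((i : ℕ) + 1) d hi (k := i) (Nat.lt_succ_self _),
        step_fst hi]
      rw [show (⟨(i : ℕ), hi⟩ : Fin d) = i from heta, Function.update_self]
    rw [heta, hfpi]
    apply hPD
    intro k hk
    exact (agree (i : ℕ) d (Nat.le_of_lt hi) k hk).symm
  rw [hsum] at h
  exact h

end Helpers

/-- partitions constructed from equally spaced query values `p·q` incur a
maximum load imbalance of less than `2·Δ`. -/
theorem stmt8 {d : ℕ} (hd : 0 < d) {N : Fin d → ℕ} (hN : ∀ m, 1 ≤ N m)
    (C : Fin d → (Fin d → ℕ) → ℕ → ℕ) (hPD : PrefixDep C)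
    (hMono : IsMonotoneFam N C) (hZero : IsZeroBased N C) (hHC : IsHierConsistent N C)
    (Δ : ℕ) (hΔ : LastLevelGapBound N C Δ)
    (q P : ℕ) (hq : 1 ≤ q) (hP : 1 ≤ P)
    (hPq : P * q < C ⟨0, hd⟩ (fun _ => 0) (N ⟨0, hd⟩)) :
    ∀ p : ℕ, p < P → ∀ p' : ℕ, p' < P →
      |(((totalCost C (findPartition N C ((p + 1) * q)) : ℤ)
            - (totalCost C (findPartition N C (p * q)) : ℤ))
          - ((totalCost C (findPartition N C ((p' + 1) * q)) : ℤ)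
            - (totalCost C (findPartition N C (p' * q)) : ℤ)))|
        < 2 * (Δ : ℤ) := by
  intro p hp p' hp'
  have hbound : ∀ r : ℕ, r ≤ P → r * q < C ⟨0, hd⟩ (fun _ => 0) (N ⟨0, hd⟩) := fun r hr =>
    lt_of_le_of_lt (Nat.mul_le_mul_right q hr) hPq
  have h0 := total_eq hN hPD hZero (p * q)
  have h1 := total_eq hN hPD hZero ((p + 1) * q)
  have h0' := total_eq hN hPD hZero (p' * q)
  have h1' := total_eq hN hPD hZero ((p' + 1) * q)
  have r0 := residual_lt hd hN hZero hHC hΔ (hbound p hp.le)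
  have r1 := residual_lt hd hN hZero hHC hΔ (hbound (p + 1) hp)
  have r0' := residual_lt hd hN hZero hHC hΔ (hbound p' hp'.le)
  have r1' := residual_lt hd hN hZero hHC hΔ (hbound (p' + 1) hp')
  have e : (p + 1) * q = p * q + q := by ring
  have e' : (p' + 1) * q = p' * q + q := by ring
  rw [e] at h1 r1 ⊢
  rw [e'] at h1' r1' ⊢
  rw [abs_lt]
  constructor <;>
  · generalize totalCost C (findPartition N C (p * q + q)) = T1 at *
    generalize totalCost C (findPartition N C (p * q)) = T0 at *
    generalize totalCost C (findPartition N C (p' * q + q)) = T1' at *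
    generalize totalCost C (findPartition N C (p' * q)) = T0' at *
    generalize p * q = a at *
    generalize p' * q = b at *
    omega

end Nacho
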